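/- arXiv:2010.01530 — 3 statements merged into one kernel-verified Lean document; each statement's English description precedes it below -/
import Mathlib

section
/- Let (ℤ, c1) and (ℤ, c2) be two networks on the line graph ℤ (edges {i, i+1}) such that (ℤ, c2) is recurrent. Then almost surely, for every p ∈ [0,1) simultaneously, the disordered random network (ℤ, c1, c2, p) is recurrent. -/
open MeasureTheory ProbabilityTheory Filter
open scoped ENNReal Classical

noncomputable section

/-- The uniform distribution on `[0,1]`. -/
def unif01 : Measure ℝ := volume.restrict (Set.Icc 0 1)

variable {V : Type*}

/-- The conductances of the disordered random network `(G, c1, c2, p)` determined by percolation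
labels `lbl` (an edge `{x,y}` is `p`-open iff `lbl s(x,y) ≤ p`): open edges get conductance `c1`,
closed edges get `c2`. -/
def dCond (c1 c2 : V → V → ℝ) (lbl : Sym2 V → ℝ) (p : ℝ) : V → V → ℝ :=
  fun x y => if lbl s(x, y) ≤ p then c1 x y else c2 x y

/-- The biased conductance `C_λ(e) = λ^{-|e|}` on the graph `G` rooted at `o`, where
`|e| = min(dist(o,x), dist(o,y))` for an edge `e = {x,y}`; zero off edges. -/
def biasedCond (G : SimpleGraph V) (o : V) (lam : ℝ) : V → V → ℝ :=
  fun x y => if G.Adj x y then lam ^ (-(min (G.dist o x) (G.dist o y) : ℤ)) else 0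

/-- `θ` is a unit flow on the graph `G` from the vertex `a` to infinity: it is antisymmetric,
supported on edges, has zero divergence away from `a` and divergence `1` at `a`. -/
structure IsUnitFlowTo (G : SimpleGraph V) (θ : V → V → ℝ) (a : V) : Prop where
  antisymm : ∀ x y, θ x y = - θ y x
  support : ∀ x y, ¬ G.Adj x y → θ x y = 0
  div_zero : ∀ x, x ≠ a → ∑ᶠ y, θ x y = 0
  unit : ∑ᶠ y, θ a y = 1

/-- The energy `∑_e θ(e)² / c(e)` of the antisymmetric function `θ` with respect to the
conductances `c` (valued in `ℝ≥0∞`; each undirected edge is counted twice, which does not affect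
finiteness; a nonzero flow through a zero-conductance edge yields infinite energy). -/
def flowEnergy (c : V → V → ℝ) (θ : V → V → ℝ) : ℝ≥0∞ :=
  ∑' q : V × V, ENNReal.ofReal ((θ q.1 q.2) ^ 2) / ENNReal.ofReal (c q.1 q.2)

/-- The network `(G, c)` is transient at the vertex `a` if `a` admits a unit flow to infinity of
finite energy. -/
def TransientAt (G : SimpleGraph V) (c : V → V → ℝ) (a : V) : Prop :=
  ∃ θ : V → V → ℝ, IsUnitFlowTo G θ a ∧ flowEnergy c θ ≠ ⊤

/-- The network `(G, c)` is transient: some vertex admits a unit flow to infinity of finite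
energy. -/
def NetTransient (G : SimpleGraph V) (c : V → V → ℝ) : Prop :=
  ∃ a : V, TransientAt G c a

/-- The network `(G, c)` is recurrent: no vertex admits a unit flow to infinity of finite energy
(equivalently, every connected component of the subgraph spanned by positive-conductance edges is
recurrent). -/
def NetRecurrent (G : SimpleGraph V) (c : V → V → ℝ) : Prop :=
  ∀ a : V, ¬ TransientAt G c a

/-- The subgraph of `p`-open edges of `G` under percolation labels `lbl`. -/
def openSub (G : SimpleGraph V) (lbl : Sym2 V → ℝ) (p : ℝ) : SimpleGraph V where
  Adj x y := G.Adj x y ∧ lbl s(x, y) ≤ p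
  symm := ⟨by
    intro x y h
    exact ⟨h.1.symm, by rw [Sym2.eq_swap]; exact h.2⟩⟩
  loopless := ⟨fun x h => G.loopless.irrefl x h.1⟩

/-- There is an infinite open cluster in Bernoulli-`p` bond percolation on `G` with labels
`lbl`. -/
def HasInfCluster (G : SimpleGraph V) (lbl : Sym2 V → ℝ) (p : ℝ) : Prop :=
  ∃ x : V, {y : V | (openSub G lbl p).Reachable x y}.Infinite

/-- The family `U` of edge labels is an i.i.d. family of uniform-`[0,1]` random variables on the
probability space `(Ω, P)` (the grand coupling of Bernoulli bond percolation). -/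
def IsGrandCoupling {ι : Type*} {Ω : Type*} [MeasurableSpace Ω] (P : Measure Ω)
    (U : ι → Ω → ℝ) : Prop :=
  (∀ e, Measurable (U e)) ∧ iIndepFun U P ∧
    ∀ e, P.map (U e) = unif01

/-- The critical probability of Bernoulli bond percolation on `G`, realized through the grand
coupling `(P, U)`: the supremum of those `p ∈ [0,1]` for which almost surely there is no infinite
open cluster. -/
def percolationPc (G : SimpleGraph V) {Ω : Type*} [MeasurableSpace Ω] (P : Measure Ω)
    (U : Sym2 V → Ω → ℝ) : ℝ :=
  sSup {p : ℝ | p ∈ Set.Icc (0 : ℝ) 1 ∧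
    ∀ᵐ a ∂P, ¬ HasInfCluster G (fun e => U e a) p}

/-- The graph `G`, rooted at `o`, has (volume) growth rate `g`:
`|B_n(o)|^{1/n} → g` where `B_n(o)` is the ball of radius `n` around `o`. -/
def HasGrowthRate (G : SimpleGraph V) (o : V) (g : ℝ) : Prop :=
  Tendsto (fun n : ℕ => (({y : V | G.dist o y ≤ n}.ncard : ℝ)) ^ ((n : ℝ)⁻¹)) atTop (nhds g)

/-- `G` is quasi-transitive: its automorphism group has finitely many orbits on vertices. -/
def QuasiTransitive (G : SimpleGraph V) : Prop :=
  ∃ s : Finset V, ∀ x : V, ∃ y ∈ s, ∃ φ : G ≃g G, φ y = x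


/-- The line graph on `ℤ`, with edges `{i, i+1}`. -/
def zline : SimpleGraph ℤ where
  Adj x y := x = y + 1 ∨ y = x + 1
  symm := ⟨by intro x y h; tauto⟩
  loopless := ⟨by intro x h; omega⟩

/-!
A unit flow on `ℤ` from `a` is forced by Kirchhoff's law: it carries some constant `α` across
every edge to the right of `a` and `α - 1` across every edge to the left. Hence `(ℤ, c)` is
transient at `a` iff one of the two half-lines from `a` has finite total resistance `∑ 1 / c(e)`.

Recurrence of `c2` makes every half-line resistance of `c2` infinite, also after truncating each
term at `1`. The edges closed at level `q` (`U_e > q`) are independent events of probability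
`1 - q`, and for independent `A_i` with `P(A_i) ≥ ρ > 0` and weights `b_i ∈ [0,1]` of infinite sum,
`E[exp(-∑_{i ∈ s} b_i 1_{A_i})] ≤ exp(-ρ (1 - e⁻¹) ∑_{i ∈ s} b_i)`, so `∑ b_i 1_{A_i} = ∞` a.s.
Closed edges keep conductance `c2` for every `p < q`; so a.s., for all rational `q < 1` at once,
both half-lines of `(ℤ, c1, c2, p)` have infinite resistance.
-/

open Real

-- `∞` when the conductance vanishes, since `ENNReal.ofReal 0 = 0` and `0⁻¹ = ∞`.
def zlineResistance (c : ℤ → ℤ → ℝ) (n : ℤ) : ℝ≥0∞ := (ENNReal.ofReal (c n (n + 1)))⁻¹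

def zlineFlow (g : ℤ → ℝ) : ℤ → ℤ → ℝ := fun x y =>
  if y = x + 1 then g x else if x = y + 1 then -g y else 0

section Line

variable {M : Type*} [AddCommMonoid M]

lemma support_subset_of_zline {f : ℤ → M} {x : ℤ} (hf : ∀ y, ¬ zline.Adj x y → f y = 0) :
    f.support ⊆ (({x - 1, x + 1} : Finset ℤ) : Set ℤ) := by
  intro y hy
  by_contra hxy
  simp only [Finset.coe_insert, Finset.coe_singleton, Set.mem_insert_iff,
    Set.mem_singleton_iff] at hxy
  exact hy (hf y (by simp only [zline]; omega))

lemma finsum_eq_of_zline {f : ℤ → M} {x : ℤ} (hf : ∀ y, ¬ zline.Adj x y → f y = 0) :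
    ∑ᶠ y, f y = f (x - 1) + f (x + 1) := by
  rw [finsum_eq_sum_of_support_subset _ (support_subset_of_zline hf),
    Finset.sum_pair (by omega)]

lemma tsum_eq_of_zline [TopologicalSpace M] {f : ℤ → M} {x : ℤ}
    (hf : ∀ y, ¬ zline.Adj x y → f y = 0) :
    ∑' y, f y = f (x - 1) + f (x + 1) := by
  rw [tsum_eq_sum' (support_subset_of_zline hf), Finset.sum_pair (by omega)]

end Line

lemma IsUnitFlowTo.zline_sub_eq {θ : ℤ → ℤ → ℝ} {a : ℤ} (hθ : IsUnitFlowTo zline θ a) (n : ℤ) :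
    θ n (n + 1) - θ (n - 1) n = if n = a then 1 else 0 := by
  have hdiv : ∑ᶠ y, θ n y = θ n (n + 1) - θ (n - 1) n := by
    rw [finsum_eq_of_zline (hθ.support n), hθ.antisymm n (n - 1)]
    ring
  split_ifs with h
  · exact hdiv ▸ h ▸ hθ.unit
  · exact hdiv ▸ hθ.div_zero n h

lemma eq_ite_of_sub_eq_ite {g : ℤ → ℝ} {a : ℤ}
    (hg : ∀ n, g n - g (n - 1) = if n = a then 1 else 0) (n : ℤ) :
    g n = if a ≤ n then g a else g a - 1 := by
  split_ifs with hn
  · induction n, hn using Int.leInduction with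
    | base => rfl
    | succ m hm ih =>
      have := hg (m + 1)
      rw [if_neg (by omega), add_sub_cancel_right] at this
      linarith
  · induction n, (by omega : n ≤ a - 1) using Int.leInductionDown with
    | base => have := hg a; rw [if_pos rfl] at this; linarith
    | pred m hm ih =>
      have := hg m
      rw [if_neg (by omega)] at this
      linarith [ih (by omega)]

lemma zlineFlow_of_not_adj (g : ℤ → ℝ) {x y : ℤ} (h : ¬ zline.Adj x y) : zlineFlow g x y = 0 := by
  simp only [zline] at h
  simp only [zlineFlow]
  split_ifs <;> first | rfl | (exfalso; omega)

lemma isUnitFlowTo_zlineFlow {g : ℤ → ℝ} {a : ℤ}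
    (hg : ∀ n, g n - g (n - 1) = if n = a then 1 else 0) :
    IsUnitFlowTo zline (zlineFlow g) a := by
  have hsupp : ∀ x y, ¬ zline.Adj x y → zlineFlow g x y = 0 := fun x y => zlineFlow_of_not_adj g
  have hdiv : ∀ x, ∑ᶠ y, zlineFlow g x y = g x - g (x - 1) := by
    intro x
    rw [finsum_eq_of_zline (hsupp x)]
    simp [zlineFlow, if_neg (show x - 1 ≠ x + 1 by omega)]
    ring
  refine ⟨fun x y => ?_, hsupp, fun x hx => ?_, ?_⟩
  · simp only [zlineFlow]
    split_ifs <;> first | (exfalso; omega) | ring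
  · rw [hdiv, hg, if_neg hx]
  · rw [hdiv, hg, if_pos rfl]

lemma tsum_forward_le_flowEnergy (c θ : ℤ → ℤ → ℝ) :
    ∑' n : ℤ, ENNReal.ofReal (θ n (n + 1) ^ 2) / ENNReal.ofReal (c n (n + 1)) ≤
      flowEnergy c θ := by
  rw [flowEnergy, ENNReal.tsum_prod']
  exact ENNReal.tsum_le_tsum fun n => ENNReal.le_tsum (n + 1)

lemma flowEnergy_zlineFlow {c : ℤ → ℤ → ℝ} (hc : ∀ x y, c x y = c y x) (g : ℤ → ℝ) :
    flowEnergy c (zlineFlow g) =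
      2 * ∑' n : ℤ, ENNReal.ofReal (g n ^ 2) / ENNReal.ofReal (c n (n + 1)) := by
  set f : ℤ → ℝ≥0∞ := fun n => ENNReal.ofReal (g n ^ 2) / ENNReal.ofReal (c n (n + 1))
  have hrow : ∀ x, ∑' y, ENNReal.ofReal (zlineFlow g x y ^ 2) / ENNReal.ofReal (c x y) =
      f (x - 1) + f x := by
    intro x
    rw [tsum_eq_of_zline (x := x) fun y hy => by simp [zlineFlow_of_not_adj g hy]]
    simp [f, zlineFlow, if_neg (show x - 1 ≠ x + 1 by omega), hc x (x - 1)]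
  rw [flowEnergy, ENNReal.tsum_prod', tsum_congr hrow, ENNReal.tsum_add, two_mul]
  exact congrArg (· + _) ((Equiv.subRight 1).tsum_eq f)

lemma tsum_int_eq_add_ray (f : ℤ → ℝ≥0∞) (a : ℤ) :
    ∑' n : ℤ, f n = ∑' n : ℕ, f (a + n) + ∑' n : ℕ, f (a - 1 - n) := by
  rw [← (Equiv.addLeft a).tsum_eq, tsum_of_nat_of_neg_add_one ENNReal.summable ENNReal.summable]
  congr 2 with n
  simp only [Equiv.coe_addLeft]
  ring_nf

lemma tsum_ite_sq_div_eq (c : ℤ → ℤ → ℝ) (a : ℤ) (α β : ℝ) :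
    ∑' n : ℤ, ENNReal.ofReal ((if a ≤ n then α else β) ^ 2) / ENNReal.ofReal (c n (n + 1)) =
      ENNReal.ofReal (α ^ 2) * ∑' n : ℕ, zlineResistance c (a + n) +
        ENNReal.ofReal (β ^ 2) * ∑' n : ℕ, zlineResistance c (a - 1 - n) := by
  rw [tsum_int_eq_add_ray _ a, ← ENNReal.tsum_mul_left, ← ENNReal.tsum_mul_left]
  congr 1 <;> refine tsum_congr fun n => ?_
  · rw [if_pos (by omega), div_eq_mul_inv, zlineResistance]
  · rw [if_neg (by omega), div_eq_mul_inv, zlineResistance]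

lemma TransientAt.zline_tsum_ne_top {c : ℤ → ℤ → ℝ} {a : ℤ} (h : TransientAt zline c a) :
    ∑' n : ℕ, zlineResistance c (a + n) ≠ ⊤ ∨ ∑' n : ℕ, zlineResistance c (a - 1 - n) ≠ ⊤ := by
  obtain ⟨θ, hθ, hE⟩ := h
  set α := θ a (a + 1)
  have hθα : ∀ n, θ n (n + 1) = if a ≤ n then α else α - 1 :=
    eq_ite_of_sub_eq_ite (g := fun n => θ n (n + 1)) fun n => by simpa using hθ.zline_sub_eq n
  have hfin := tsum_forward_le_flowEnergy c θ
  simp only [hθα, tsum_ite_sq_div_eq] at hfin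
  obtain ⟨hright, hleft⟩ := ENNReal.add_ne_top.1 (ne_top_of_le_ne_top hE hfin)
  rcases eq_or_ne α 0 with hα | hα
  · exact .inr (ENNReal.lt_top_of_mul_ne_top_right hleft (by simp [hα])).ne
  · exact .inl (ENNReal.lt_top_of_mul_ne_top_right hright (by simp [hα])).ne

lemma transientAt_zline_of_tsum_ne_top {c : ℤ → ℤ → ℝ} (hc : ∀ x y, c x y = c y x) {a : ℤ}
    (h : ∑' n : ℕ, zlineResistance c (a + n) ≠ ⊤ ∨
      ∑' n : ℕ, zlineResistance c (a - 1 - n) ≠ ⊤) :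
    TransientAt zline c a := by
  have key : ∀ α : ℝ, ENNReal.ofReal (α ^ 2) * ∑' n : ℕ, zlineResistance c (a + n) +
      ENNReal.ofReal ((α - 1) ^ 2) * ∑' n : ℕ, zlineResistance c (a - 1 - n) ≠ ⊤ →
      TransientAt zline c a := by
    intro α hα
    refine ⟨zlineFlow fun n => if a ≤ n then α else α - 1,
      isUnitFlowTo_zlineFlow fun n => ?_, ?_⟩
    · split_ifs <;> first | (exfalso; omega) | ring
    · rw [flowEnergy_zlineFlow hc, tsum_ite_sq_div_eq]
      exact ENNReal.mul_ne_top ENNReal.ofNat_ne_top hα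
  rcases h with h | h
  · exact key 1 (by simpa using h)
  · exact key 0 (by simpa using h)

lemma NetRecurrent.zline_tsum_eq_top {c : ℤ → ℤ → ℝ} (hc : ∀ x y, c x y = c y x)
    (h : NetRecurrent zline c) (a : ℤ) :
    ∑' n : ℕ, zlineResistance c (a + n) = ⊤ ∧ ∑' n : ℕ, zlineResistance c (a - 1 - n) = ⊤ := by
  by_contra hne
  exact h a (transientAt_zline_of_tsum_ne_top hc (by rwa [not_and_or] at hne))

lemma exp_neg_le_one_sub_mul {r : ℝ} (hr0 : 0 ≤ r) (hr1 : r ≤ 1) :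
    exp (-r) ≤ 1 - (1 - exp (-1)) * r :=
  calc exp (-r) = exp ((1 - r) * 0 + r * (-1)) := by ring_nf
    _ ≤ (1 - r) * exp 0 + r * exp (-1) :=
        convexOn_exp.2 (Set.mem_univ _) (Set.mem_univ _) (by linarith) hr0 (by ring)
    _ = 1 - (1 - exp (-1)) * r := by rw [exp_zero]; ring

lemma tsum_min_one_eq_top {f : ℕ → ℝ≥0∞} (hf : ∀ m, ∑' n, f (n + m) = ⊤) :
    ∑' n, min (f n) 1 = ⊤ := by
  by_contra h
  obtain ⟨m, hm⟩ := (ENNReal.finite_const_le_of_tsum_ne_top h one_ne_zero).bddAbove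
  have hsmall : ∀ n, min (f (n + (m + 1))) 1 = f (n + (m + 1)) := fun n => by
    have : ¬ 1 ≤ min (f (n + (m + 1))) 1 := fun h1 => by have := hm h1; omega
    rw [not_le, min_lt_iff, lt_self_iff_false, or_false] at this
    exact min_eq_left this.le
  refine ne_top_of_le_ne_top h ?_ (hf (m + 1))
  calc ∑' n, f (n + (m + 1)) = ∑' n, min (f (n + (m + 1))) 1 :=
        tsum_congr fun n => (hsmall n).symm
    _ ≤ ∑' n, min (f n) 1 :=
        ENNReal.tsum_comp_le_tsum_of_injective (add_left_injective _) fun n => min (f n) 1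

section Probability

variable {Ω : Type*} [MeasurableSpace Ω] {P : Measure Ω} {ι : Type*}

lemma lintegral_exp_neg_mul_indicator_le [IsProbabilityMeasure P] {A : Set Ω}
    (hA : MeasurableSet A) {r : ℝ} (hr0 : 0 ≤ r) (hr1 : r ≤ 1) :
    ∫⁻ ω, ENNReal.ofReal (exp (-(r * A.indicator 1 ω))) ∂P ≤
      ENNReal.ofReal (exp (-(P.real A * (1 - exp (-1)) * r))) := by
  have hpt : ∀ ω, exp (-(r * A.indicator 1 ω)) = 1 - (1 - exp (-r)) * A.indicator 1 ω := by
    intro ω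
    by_cases hω : ω ∈ A <;> simp [hω]
  have hind : Integrable (A.indicator 1) P := (integrable_const (1 : ℝ)).indicator hA
  have hint : Integrable (fun ω => 1 - (1 - exp (-r)) * A.indicator 1 ω) P :=
    (integrable_const 1).sub (hind.const_mul _)
  simp_rw [hpt]
  rw [← ofReal_integral_eq_lintegral_ofReal hint
    (ae_of_all _ fun ω => by simpa [← hpt] using (exp_pos _).le),
    integral_sub (integrable_const 1) (hind.const_mul _), integral_const_mul,
    integral_indicator_one hA]
  refine ENNReal.ofReal_le_ofReal ?_
  have ht0 : 0 ≤ P.real A := measureReal_nonneg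
  have ht1 : P.real A ≤ 1 := measureReal_le_one
  simp only [integral_const, probReal_univ, smul_eq_mul, one_mul]
  nlinarith [exp_neg_le_one_sub_mul hr0 hr1, add_one_le_exp (-(P.real A * (1 - exp (-1)) * r))]

lemma tsum_ofReal_eq_top_of_iInf_prod_eq_zero {x : ι → ℝ} (hx : ∀ i, 0 ≤ x i)
    (h : ⨅ s : Finset ι, ∏ i ∈ s, ENNReal.ofReal (exp (-x i)) = 0) :
    ∑' i, ENNReal.ofReal (x i) = ⊤ := by
  by_contra hT
  have hpartial (s : Finset ι) :
      ENNReal.ofReal (exp (-(∑' i, ENNReal.ofReal (x i)).toReal)) ≤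
        ∏ i ∈ s, ENNReal.ofReal (exp (-x i)) := by
    have hsum : ∑ i ∈ s, x i ≤ (∑' i, ENNReal.ofReal (x i)).toReal := by
      rw [← ENNReal.ofReal_le_iff_le_toReal hT, ENNReal.ofReal_sum_of_nonneg fun i _ => hx i]
      exact ENNReal.sum_le_tsum s
    rw [← ENNReal.ofReal_prod_of_nonneg fun _ _ => (exp_pos _).le, ← exp_sum,
      Finset.sum_neg_distrib]
    exact ENNReal.ofReal_le_ofReal (exp_le_exp.2 (neg_le_neg hsum))
  have := (le_iInf hpartial).trans_eq h
  rw [nonpos_iff_eq_zero, ENNReal.ofReal_eq_zero] at this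
  exact (exp_pos _).not_ge this

namespace ProbabilityTheory

lemma iIndepSet.lintegral_prod_exp_neg_le {A : ι → Set Ω} (hA : iIndepSet A P)
    (hAm : ∀ i, MeasurableSet (A i)) {ρ : ℝ} (hPA : ∀ i, ρ ≤ P.real (A i)) {r : ι → ℝ}
    (hr0 : ∀ i, 0 ≤ r i) (hr1 : ∀ i, r i ≤ 1) (s : Finset ι) :
    ∫⁻ ω, ∏ i ∈ s, ENNReal.ofReal (exp (-(r i * (A i).indicator 1 ω))) ∂P ≤
      ENNReal.ofReal (exp (-(ρ * (1 - exp (-1)) * ∑ i ∈ s, r i))) := by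
  have := hA.isProbabilityMeasure
  have hindep : iIndepFun (fun i ω => ENNReal.ofReal (exp (-(r i * (A i).indicator 1 ω)))) P :=
    hA.iIndepFun_indicator.comp (fun i x => ENNReal.ofReal (exp (-(r i * x)))) fun i => by fun_prop
  rw [lintegral_prod_eq_prod_lintegral_of_indepFun s _ hindep fun i => by
    fun_prop (disch := exact hAm i)]
  calc _ ≤ ∏ i ∈ s, ENNReal.ofReal (exp (-(ρ * (1 - exp (-1)) * r i))) := by
        refine Finset.prod_le_prod' fun i _ =>
          (lintegral_exp_neg_mul_indicator_le (hAm i) (hr0 i) (hr1 i)).trans ?_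
        refine ENNReal.ofReal_le_ofReal (exp_le_exp.2 (neg_le_neg ?_))
        have : 0 ≤ 1 - exp (-1) := by simp
        exact mul_le_mul_of_nonneg_right (mul_le_mul_of_nonneg_right (hPA i) this) (hr0 i)
    _ = _ := by
        rw [← ENNReal.ofReal_prod_of_nonneg fun _ _ => (exp_pos _).le, ← exp_sum,
          Finset.mul_sum, Finset.sum_neg_distrib]

theorem iIndepSet.ae_tsum_indicator_eq_top [Countable ι] {A : ι → Set Ω} (hA : iIndepSet A P)
    (hAm : ∀ i, MeasurableSet (A i)) {ρ : ℝ} (hρ : 0 < ρ) (hPA : ∀ i, ρ ≤ P.real (A i))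
    {b : ι → ℝ≥0∞} (hb1 : ∀ i, b i ≤ 1) (hb : ∑' i, b i = ⊤) :
    ∀ᵐ ω ∂P, ∑' i, (A i).indicator (fun _ => b i) ω = ⊤ := by
  have hb_ne_top : ∀ i, b i ≠ ⊤ := fun i => ne_top_of_le_ne_top ENNReal.one_ne_top (hb1 i)
  set r : ι → ℝ := fun i => (b i).toReal
  have hr1 : ∀ i, r i ≤ 1 := fun i =>
    ENNReal.toReal_le_of_le_ofReal zero_le_one (by simpa using hb1 i)
  have hunbdd (M : ℕ) : ∃ s : Finset ι, (M : ℝ) ≤ ∑ i ∈ s, r i := by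
    rw [ENNReal.tsum_eq_iSup_sum] at hb
    obtain ⟨s, hs⟩ := lt_iSup_iff.1 (hb ▸ ENNReal.natCast_lt_top M)
    refine ⟨s, ?_⟩
    rw [← ENNReal.toReal_sum fun i _ => hb_ne_top i, ← ENNReal.toReal_natCast]
    exact ENNReal.toReal_mono (ENNReal.sum_ne_top.2 fun i _ => hb_ne_top i) hs.le
  set κ := ρ * (1 - exp (-1))
  have hκ : 0 < κ := mul_pos hρ (by simp)
  set L : Ω → ℝ≥0∞ := fun ω =>
    ⨅ s : Finset ι, ∏ i ∈ s, ENNReal.ofReal (exp (-(r i * (A i).indicator 1 ω)))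
  have hL : ∫⁻ ω, L ω ∂P = 0 := by
    have hlim : Tendsto (fun M : ℕ => ENNReal.ofReal (exp (-(κ * M)))) atTop (nhds 0) := by
      rw [← ENNReal.ofReal_zero]
      exact ENNReal.tendsto_ofReal <| tendsto_exp_atBot.comp <| tendsto_neg_atTop_atBot.comp <|
        tendsto_natCast_atTop_atTop.const_mul_atTop hκ
    refine le_antisymm (ge_of_tendsto' hlim fun M => ?_) zero_le
    obtain ⟨s, hs⟩ := hunbdd M
    calc ∫⁻ ω, L ω ∂P ≤ _ := lintegral_mono fun ω => iInf_le _ s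
      _ ≤ _ := hA.lintegral_prod_exp_neg_le hAm hPA (fun _ => ENNReal.toReal_nonneg) hr1 s
      _ ≤ _ := ENNReal.ofReal_le_ofReal <| exp_le_exp.2 <| by nlinarith
  have hLm : Measurable L := Measurable.iInf fun s => by fun_prop (disch := exact hAm _)
  filter_upwards [(lintegral_eq_zero_iff hLm).1 hL] with ω hω
  have hterm (i : ι) :
      ENNReal.ofReal (r i * (A i).indicator 1 ω) = (A i).indicator (fun _ => b i) ω := by
    by_cases hi : ω ∈ A i <;> simp [hi, r, hb_ne_top i]
  simp_rw [← hterm]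
  exact tsum_ofReal_eq_top_of_iInf_prod_eq_zero
    (fun i => mul_nonneg ENNReal.toReal_nonneg (Set.indicator_nonneg (fun _ _ => zero_le_one) _))
    hω

end ProbabilityTheory

end Probability

section GrandCoupling

variable {Ω : Type*} [MeasurableSpace Ω] {P : Measure Ω} {ι : Type*} {U : ι → Ω → ℝ}

lemma IsGrandCoupling.iIndepSet_lt (hU : IsGrandCoupling P U) (q : ℝ) :
    iIndepSet (fun i => {ω | q < U i ω}) P := by
  rw [iIndepSet_iff_meas_biInter fun i => measurableSet_lt measurable_const (hU.1 i)]
  exact fun s => iIndepFun_iff_measure_inter_preimage_eq_mul.1 hU.2.1 s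
    (sets := fun _ => Set.Ioi q) fun _ _ => measurableSet_Ioi

lemma IsGrandCoupling.measureReal_lt (hU : IsGrandCoupling P U) (i : ι) {q : ℝ} (hq0 : 0 ≤ q)
    (hq1 : q ≤ 1) : P.real {ω | q < U i ω} = 1 - q := by
  have hIoc : Set.Ioi q ∩ Set.Icc 0 1 = Set.Ioc q 1 := by
    ext x
    simp only [Set.mem_inter_iff, Set.mem_Ioi, Set.mem_Icc, Set.mem_Ioc]
    exact ⟨fun h => ⟨h.1, h.2.2⟩, fun h => ⟨h.1, by linarith [h.1], h.2⟩⟩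
  have : P (U i ⁻¹' Set.Ioi q) = ENNReal.ofReal (1 - q) := by
    rw [← Measure.map_apply (hU.1 i) measurableSet_Ioi, hU.2.2 i, unif01,
      Measure.restrict_apply measurableSet_Ioi, hIoc, Real.volume_Ioc]
  change P.real (U i ⁻¹' Set.Ioi q) = 1 - q
  rw [measureReal_def, this, ENNReal.toReal_ofReal (by linarith)]

lemma IsGrandCoupling.ae_tsum_zlineResistance_dCond_eq_top {U : Sym2 ℤ → Ω → ℝ}
    (hU : IsGrandCoupling P U) (c1 : ℤ → ℤ → ℝ) {c2 : ℤ → ℤ → ℝ} {k : ℕ → ℤ}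
    (hk : Function.Injective k) (hc2 : ∀ m, ∑' n, zlineResistance c2 (k (n + m)) = ⊤)
    {q : ℝ} (hq0 : 0 ≤ q) (hq1 : q < 1) :
    ∀ᵐ ω ∂P, ∀ p < q, ∑' n, zlineResistance (dCond c1 c2 (fun e => U e ω) p) (k n) = ⊤ := by
  have he : Function.Injective fun n => s(k n, k n + 1) := by
    intro m n h
    simp only [Sym2.eq_iff] at h
    exact hk (by omega)
  set A : ℕ → Set Ω := fun n => {ω | q < U s(k n, k n + 1) ω}
  have hA : iIndepSet A P := (hU.iIndepSet_lt q).precomp he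
  filter_upwards [hA.ae_tsum_indicator_eq_top
    (fun _ => measurableSet_lt measurable_const (hU.1 _)) (sub_pos.2 hq1)
    (fun _ => (hU.measureReal_lt _ hq0 hq1.le).ge) (fun _ => min_le_right _ 1)
    (tsum_min_one_eq_top (f := fun n => zlineResistance c2 (k n)) hc2)] with ω hω p hpq
  refine top_le_iff.1 (hω ▸ ENNReal.tsum_le_tsum fun n => ?_)
  by_cases hn : ω ∈ A n
  · have hclosed : ¬ U s(k n, k n + 1) ω ≤ p := not_le.2 (hpq.trans hn)
    simp only [Set.indicator_of_mem hn, zlineResistance, dCond, if_neg hclosed]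
    exact min_le_left _ _
  · rw [Set.indicator_of_notMem hn]
    exact zero_le

end GrandCoupling

theorem statement_2_general
    (c1 c2 : ℤ → ℤ → ℝ)
    (hc2symm : ∀ x y, c2 x y = c2 y x)
    (hrec : NetRecurrent zline c2)
    {Ω : Type*} [MeasurableSpace Ω] (P : Measure Ω)
    (U : Sym2 ℤ → Ω → ℝ) (hU : IsGrandCoupling P U) :
    ∀ᵐ a ∂P, ∀ p : ℝ, 0 ≤ p → p < 1 →
      NetRecurrent zline (dCond c1 c2 (fun e => U e a) p) := by
  have hrays := hrec.zline_tsum_eq_top hc2symm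
  have hae : ∀ᵐ ω ∂P, ∀ (a : ℤ) (q : ℚ), 0 ≤ (q : ℝ) → (q : ℝ) < 1 → ∀ p < (q : ℝ),
      ∑' n : ℕ, zlineResistance (dCond c1 c2 (fun e => U e ω) p) (a + n) = ⊤ ∧
      ∑' n : ℕ, zlineResistance (dCond c1 c2 (fun e => U e ω) p) (a - 1 - n) = ⊤ := by
    refine ae_all_iff.2 fun a => ae_all_iff.2 fun q => eventually_imp_distrib_left.2 fun hq0 =>
      eventually_imp_distrib_left.2 fun hq1 => ?_
    filter_upwards [hU.ae_tsum_zlineResistance_dCond_eq_top c1 (c2 := c2) (k := fun n : ℕ => a + n)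
        (fun m n h => by simpa using h)
        (fun m => by convert (hrays (a + m)).1 using 4; push_cast; ring) hq0 hq1,
      hU.ae_tsum_zlineResistance_dCond_eq_top c1 (c2 := c2) (k := fun n : ℕ => a - 1 - n)
        (fun m n h => by simpa using h)
        (fun m => by convert (hrays (a - m)).2 using 4; push_cast; ring) hq0 hq1]
      with ω hright hleft p hpq
    exact ⟨hright p hpq, hleft p hpq⟩
  filter_upwards [hae] with ω hω p hp0 hp1 a htrans
  obtain ⟨q, hpq, hq1⟩ := exists_rat_btwn hp1
  obtain ⟨hright, hleft⟩ := hω a q (hp0.trans hpq.le) hq1 p hpq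
  exact htrans.zline_tsum_ne_top.elim (· hright) (· hleft)

/-- Let `(ℤ, c1)` and `(ℤ, c2)` be two networks on the line graph `ℤ` such that
`(ℤ, c2)` is recurrent. Then almost surely, for every `p ∈ [0,1)` simultaneously, the disordered
random network `(ℤ, c1, c2, p)` is recurrent. -/
theorem statement_2
    (c1 c2 : ℤ → ℤ → ℝ)
    (hc1symm : ∀ x y, c1 x y = c1 y x) (hc1nonneg : ∀ x y, 0 ≤ c1 x y)
    (hc1supp : ∀ x y, ¬ zline.Adj x y → c1 x y = 0)
    (hc2symm : ∀ x y, c2 x y = c2 y x) (hc2nonneg : ∀ x y, 0 ≤ c2 x y)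
    (hc2supp : ∀ x y, ¬ zline.Adj x y → c2 x y = 0)
    (hrec : NetRecurrent zline c2)
    {Ω : Type*} [MeasurableSpace Ω] (P : Measure Ω) [IsProbabilityMeasure P]
    (U : Sym2 ℤ → Ω → ℝ) (hU : IsGrandCoupling P U) :
    ∀ᵐ a ∂P, ∀ p : ℝ, 0 ≤ p → p < 1 →
      NetRecurrent zline (dCond c1 c2 (fun e => U e a) p) :=
  statement_2_general c1 c2 hc2symm hrec P U hU

end
end

section
/- Let G be a Cayley graph of the group ℤ with respect to a finite symmetric generating set, and let (G, c1) and (G, c2) be two networks on G with c := sup_{e∈E} c2(e) < ∞. Then almost surely, for every p ∈ [0,1) simultaneously, the disordered random network (G, c1, c2, p) is recurrent. -/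
open MeasureTheory ProbabilityTheory Filter
open scoped ENNReal Classical

noncomputable section

variable {V : Type*}

/-!
Every edge of `G` has length at most `R = max_{s ∈ S} |s|`, so a unit flow `θ` from `a` has a net
flux `cutFlow R θ n` across each gap between `n` and `n + 1`. By Kirchhoff's law this flux is
constant for `n ≥ a` and for `n < a`, the two constants differing by `1`; so on one side of `a`
every cut carries the same flux `v ≠ 0`, and some edge of such a cut carries at least `|v| / R²`.
By the second Borel–Cantelli lemma, almost surely for every rational `q < 1` there are infinitely
many cuts on both sides whose edges all have label above `q`, hence conductance `c2 ≤ c` for every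
`p < q`. Each such cut forces energy at least `(|v| / R²)² / c`, so the energy is infinite.
Restricting to rational `q` makes the exceptional null set independent of `p`.
-/
open Finset in
def cutPairs (R : ℕ) (n : ℤ) : Finset (ℤ × ℤ) :=
  Ioc (n - R) n ×ˢ Ioc n (n + R)

lemma mem_cutPairs {R : ℕ} {n : ℤ} {z : ℤ × ℤ} :
    z ∈ cutPairs R n ↔ (n - R < z.1 ∧ z.1 ≤ n) ∧ n < z.2 ∧ z.2 ≤ n + R := by
  simp [cutPairs]

lemma card_cutPairs (R : ℕ) (n : ℤ) : (cutPairs R n).card = R * R := by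
  simp [cutPairs]

def cutFlow (R : ℕ) (θ : ℤ → ℤ → ℝ) (n : ℤ) : ℝ :=
  ∑ z ∈ cutPairs R n, θ z.1 z.2

section CutFlow

variable {R : ℕ} {θ : ℤ → ℤ → ℝ}

lemma cutFlow_eq_sum_window (hθ : ∀ x y, R < (x - y).natAbs → θ x y = 0) {n : ℤ}
    {W : Finset ℤ} (hW : Finset.Icc (n - R) (n + R) ⊆ W) :
    cutFlow R θ n = ∑ x ∈ W, ∑ y ∈ W, if x ≤ n ∧ n < y then θ x y else 0 := by
  rw [← Finset.sum_product' (f := fun x y => if x ≤ n ∧ n < y then θ x y else 0),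
    ← Finset.sum_filter]
  refine Finset.sum_subset (fun z hz => ?_) (fun z hz hz' => ?_)
  · rw [mem_cutPairs] at hz
    simp only [Finset.mem_filter, Finset.mem_product]
    exact ⟨⟨hW (Finset.mem_Icc.2 (by omega)), hW (Finset.mem_Icc.2 (by omega))⟩, by omega⟩
  · rw [mem_cutPairs] at hz'
    rw [Finset.mem_filter] at hz
    exact hθ _ _ (by omega)

lemma cutFlow_sub_cutFlow_sub_one (hθ : ∀ x y, R < (x - y).natAbs → θ x y = 0)
    (hanti : ∀ x y, θ x y = -θ y x) (n : ℤ) :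
    cutFlow R θ n - cutFlow R θ (n - 1) = ∑ᶠ y, θ n y := by
  set W := Finset.Icc (n - 1 - R) (n + R)
  have hnW : n ∈ W := Finset.mem_Icc.2 (by omega)
  rw [cutFlow_eq_sum_window hθ (W := W) (Finset.Icc_subset_Icc (by omega) (by omega)),
    cutFlow_eq_sum_window hθ (W := W) (Finset.Icc_subset_Icc (by omega) (by omega)),
    finsum_eq_sum_of_support_subset (s := W) _ fun y hy => ?_]
  swap
  · by_contra hyW
    exact hy (hθ n y (by simp [W] at hyW; omega))
  have hpt : ∀ x y,
      (if x ≤ n ∧ n < y then θ x y else 0) - (if x ≤ n - 1 ∧ n - 1 < y then θ x y else 0)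
      = (if x = n then if n < y then θ n y else 0 else 0)
        + if y = n then if x < n then θ n x else 0 else 0 := by
    intro x y
    split_ifs <;> first | ring1 | (exfalso; omega) | (subst x; ring1) | (subst y; rw [hanti]; ring1)
  simp only [← Finset.sum_sub_distrib, hpt, Finset.sum_add_distrib, Finset.sum_ite_irrel,
    Finset.sum_const_zero, Finset.sum_ite_eq', hnW, if_true]
  rw [← Finset.sum_add_distrib]
  refine Finset.sum_congr rfl fun y _ => ?_
  rcases lt_trichotomy y n with h | rfl | h
  · simp [h, h.not_gt]
  · simp [show θ y y = 0 by linarith [hanti y y]]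
  · simp [h, h.not_gt]

lemma exists_mem_cutPairs_le_abs {n : ℤ} (hn : cutFlow R θ n ≠ 0) :
    ∃ z ∈ cutPairs R n, |cutFlow R θ n| / (R * R) ≤ |θ z.1 z.2| := by
  have hne : (cutPairs R n).Nonempty := Finset.nonempty_of_sum_ne_zero hn
  have hR : (0 : ℝ) < R * R := by exact_mod_cast card_cutPairs R n ▸ hne.card_pos
  refine Finset.exists_le_of_sum_le hne ?_
  rw [Finset.sum_const, card_cutPairs, nsmul_eq_mul, Nat.cast_mul, mul_div_cancel₀ _ hR.ne']
  exact Finset.abs_sum_le_sum_abs _ _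

end CutFlow

section UnitFlow

variable {G : SimpleGraph ℤ} {R : ℕ} {θ : ℤ → ℤ → ℝ} {a : ℤ}

lemma IsUnitFlowTo.eq_zero_of_lt_natAbs (hθ : IsUnitFlowTo G θ a)
    (hG : ∀ x y, G.Adj x y → (x - y).natAbs ≤ R) {x y : ℤ} (hxy : R < (x - y).natAbs) :
    θ x y = 0 :=
  hθ.support x y fun h => (hG x y h).not_gt hxy

lemma IsUnitFlowTo.cutFlow_eq (hθ : IsUnitFlowTo G θ a)
    (hG : ∀ x y, G.Adj x y → (x - y).natAbs ≤ R) (n : ℤ) :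
    cutFlow R θ n = cutFlow R θ (a - 1) + if a ≤ n then 1 else 0 := by
  have hstep : ∀ m, cutFlow R θ m = cutFlow R θ (m - 1) + if m = a then 1 else 0 := by
    intro m
    rw [← sub_eq_iff_eq_add',
      cutFlow_sub_cutFlow_sub_one (fun x y => hθ.eq_zero_of_lt_natAbs hG) hθ.antisymm]
    split_ifs with h
    · exact h ▸ hθ.unit
    · exact hθ.div_zero m h
  induction n using Int.inductionOn' (b := a - 1) with
  | zero => simp
  | succ k hk ih =>
    rw [hstep (k + 1), add_sub_cancel_right, ih]
    split_ifs <;> first | ring1 | (exfalso; omega)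
  | pred k hk ih =>
    rw [hstep k, if_neg (by omega), if_neg (by omega)] at ih
    rw [if_neg (by omega)]
    linarith

lemma IsUnitFlowTo.exists_eventually_cutFlow_eq (hθ : IsUnitFlowTo G θ a)
    (hG : ∀ x y, G.Adj x y → (x - y).natAbs ≤ R) :
    ∃ v ≠ 0, (∀ᶠ n in atBot, cutFlow R θ n = v) ∨ ∀ᶠ n in atTop, cutFlow R θ n = v := by
  by_cases h : cutFlow R θ (a - 1) = 0
  · refine ⟨1, one_ne_zero, .inr ((eventually_ge_atTop a).mono fun n hn => ?_)⟩
    rw [hθ.cutFlow_eq hG, h, if_pos hn, zero_add]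
  · refine ⟨_, h, .inl ((eventually_lt_atBot a).mono fun n hn => ?_)⟩
    rw [hθ.cutFlow_eq hG, if_neg hn.not_ge, add_zero]

end UnitFlow

lemma flowEnergy_eq_top_of_frequently_cutFlow_eq {G : SimpleGraph ℤ} {R : ℕ}
    {d θ : ℤ → ℤ → ℝ} (hθ : ∀ x y, ¬G.Adj x y → θ x y = 0) {c' v : ℝ} (hv : v ≠ 0)
    (h : ∃ᶠ n in cofinite,
      (∀ x y, G.Adj x y → x ≤ n → n < y → d x y ≤ c') ∧ cutFlow R θ n = v) :
    flowEnergy d θ = ⊤ := by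
  obtain ⟨n₀, -, hn₀⟩ := h.exists
  have hR : (0 : ℝ) < R * R := by
    have := (Finset.nonempty_of_sum_ne_zero (hn₀.trans_ne hv)).card_pos
    rw [card_cutPairs] at this
    exact_mod_cast this
  set δ := |v| / (R * R)
  have hδ : 0 < δ := div_pos (abs_pos.2 hv) hR
  set ε := ENNReal.ofReal (δ ^ 2) / ENNReal.ofReal c'
  have hε : ε ≠ 0 :=
    (ENNReal.div_pos (ENNReal.ofReal_pos.2 (by positivity)).ne' ENNReal.ofReal_ne_top).ne'
  by_contra hE
  unfold flowEnergy at hE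
  have hheavy := ENNReal.finite_const_le_of_tsum_ne_top hE hε
  -- each good cut `n` has a heavy pair `z` with `n ∈ [z.1, z.1 + R)`
  refine frequently_cofinite_iff_infinite.1 h
    ((hheavy.biUnion fun z _ => Set.finite_Ico z.1 (z.1 + R)).subset ?_)
  rintro n ⟨hcut, hflow⟩
  obtain ⟨z, hz, hδz⟩ := exists_mem_cutPairs_le_abs (hflow.trans_ne hv)
  rw [hflow] at hδz
  rw [mem_cutPairs] at hz
  have hadj : G.Adj z.1 z.2 := by
    by_contra hna
    rw [hθ _ _ hna, abs_zero] at hδz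
    exact hδ.not_ge hδz
  refine Set.mem_biUnion (x := z) ?_ (Set.mem_Ico.2 ⟨hz.1.2, by omega⟩)
  refine ENNReal.div_le_div (ENNReal.ofReal_le_ofReal ?_)
    (ENNReal.ofReal_le_ofReal (hcut _ _ hadj hz.1.2 hz.2.1))
  simpa only [sq_abs] using pow_le_pow_left₀ hδ.le hδz 2

lemma netRecurrent_of_frequently_cut_le {G : SimpleGraph ℤ} {R : ℕ}
    (hG : ∀ x y, G.Adj x y → (x - y).natAbs ≤ R) {d : ℤ → ℤ → ℝ} {c' : ℝ}
    (hbot : ∃ᶠ n in atBot, ∀ x y, G.Adj x y → x ≤ n → n < y → d x y ≤ c')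
    (htop : ∃ᶠ n in atTop, ∀ x y, G.Adj x y → x ≤ n → n < y → d x y ≤ c') :
    NetRecurrent G d := by
  rintro a ⟨θ, hθ, hE⟩
  obtain ⟨v, hv, hside⟩ := hθ.exists_eventually_cutFlow_eq (R := R) hG
  refine hE (flowEnergy_eq_top_of_frequently_cutFlow_eq (R := R) (c' := c') hθ.support hv ?_)
  rw [Int.cofinite_eq, frequently_sup]
  exact hside.imp hbot.and_eventually htop.and_eventually

section GrandCoupling

variable {Ω : Type*} [MeasurableSpace Ω] {P : Measure Ω}

lemma IsGrandCoupling.measure_preimage_Ioi {ι : Type*} {U : ι → Ω → ℝ}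
    (hU : IsGrandCoupling P U) (e : ι) {q : ℝ} (hq0 : 0 ≤ q) :
    P (U e ⁻¹' Set.Ioi q) = ENNReal.ofReal (1 - q) := by
  have hIoc : Set.Ioi q ∩ Set.Icc 0 1 = Set.Ioc q 1 := by
    ext x
    simp only [Set.mem_inter_iff, Set.mem_Ioi, Set.mem_Icc, Set.mem_Ioc]
    constructor
    · exact fun h => ⟨h.1, h.2.2⟩
    · exact fun h => ⟨h.1, hq0.trans h.1.le, h.2⟩
  rw [← Measure.map_apply (hU.1 e) measurableSet_Ioi, hU.2.2 e, unif01,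
    Measure.restrict_apply measurableSet_Ioi, hIoc, Real.volume_Ioc]

lemma IsGrandCoupling.ae_frequently_forall_lt {ι : Type*} {U : ι → Ω → ℝ}
    (hU : IsGrandCoupling P U) {E : ℕ → Finset ι} (hE : Pairwise fun i j => Disjoint (E i) (E j))
    {m : ℕ} (hm : ∀ k, (E k).card ≤ m) {q : ℝ} (hq0 : 0 ≤ q) (hq1 : q < 1) :
    ∀ᵐ ω ∂P, ∃ᶠ k in atTop, ∀ e ∈ E k, q < U e ω := by
  have := hU.2.1.isProbabilityMeasure
  set B : ℕ → Set Ω := fun k => ⋂ e ∈ E k, U e ⁻¹' Set.Ioi q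
  have hBm : ∀ k, MeasurableSet (B k) := fun k =>
    .biInter (E k).countable_toSet fun e _ => hU.1 e measurableSet_Ioi
  have hmeas : ∀ t : Finset ι,
      P (⋂ e ∈ t, U e ⁻¹' Set.Ioi q) = ENNReal.ofReal (1 - q) ^ t.card := fun t => by
    rw [hU.2.1.measure_inter_preimage_eq_mul t (sets := fun _ => Set.Ioi q)
      (fun _ _ => measurableSet_Ioi),
      Finset.prod_congr rfl fun e _ => hU.measure_preimage_Ioi e hq0, Finset.prod_const]
  have hindep : iIndepSet B P := by
    refine (iIndepSet_iff_meas_biInter hBm).2 fun s => ?_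
    have hB : ⋂ k ∈ s, B k = ⋂ e ∈ s.biUnion E, U e ⁻¹' Set.Ioi q := by
      simp only [B, Finset.set_biInter_biUnion]
    rw [hB, hmeas, Finset.card_biUnion fun i _ j _ hij => hE hij, ← Finset.prod_pow_eq_pow_sum]
    exact Finset.prod_congr rfl fun k _ => (hmeas (E k)).symm
  have hsum : ∑' k, P (B k) = ⊤ := by
    refine top_unique ((ENNReal.tsum_const_eq_top_of_ne_zero (α := ℕ)
      (pow_ne_zero m (ENNReal.ofReal_pos.2 (sub_pos.2 hq1)).ne')).symm.le.trans
      (ENNReal.tsum_le_tsum fun k => ?_))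
    rw [hmeas]
    exact pow_le_pow_right_of_le_one' (ENNReal.ofReal_le_one.2 (by linarith)) (hm k)
  have hlimsup := measure_limsup_eq_one hBm hindep hsum
  rw [← prob_compl_eq_zero_iff (MeasurableSet.measurableSet_limsup hBm)] at hlimsup
  filter_upwards [ae_iff.2 hlimsup] with ω hω
  exact (mem_limsup_iff_frequently_mem.1 hω).mono fun k hk => by simpa [B] using hk

def IsClosedCut (R : ℕ) (lbl : Sym2 ℤ → ℝ) (q : ℝ) (n : ℤ) : Prop :=
  ∀ x y, x ≤ n → n < y → (x - y).natAbs ≤ R → q < lbl s(x, y)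

lemma disjoint_image_cutPairs {R : ℕ} {m n : ℤ} (h : R ≤ (m - n).natAbs) :
    Disjoint ((cutPairs R m).image fun z => s(z.1, z.2))
      ((cutPairs R n).image fun z => s(z.1, z.2)) := by
  simp only [Finset.disjoint_left, Finset.mem_image, not_exists, not_and]
  rintro _ ⟨z, hz, rfl⟩ w hw hwz
  rw [mem_cutPairs] at hz hw
  rcases Sym2.eq_iff.1 hwz with ⟨h1, h2⟩ | ⟨h1, h2⟩ <;> omega

lemma IsGrandCoupling.ae_frequently_isClosedCut {U : Sym2 ℤ → Ω → ℝ}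
    (hU : IsGrandCoupling P U) {R : ℕ} {ν : ℕ → ℤ}
    (hν : Pairwise fun i j => R ≤ (ν i - ν j).natAbs) {l : Filter ℤ} (hl : Tendsto ν atTop l)
    {q : ℝ} (hq0 : 0 ≤ q) (hq1 : q < 1) :
    ∀ᵐ ω ∂P, ∃ᶠ n in l, IsClosedCut R (fun e => U e ω) q n := by
  filter_upwards [hU.ae_frequently_forall_lt
    (E := fun k => (cutPairs R (ν k)).image fun z => s(z.1, z.2))
    (fun i j hij => disjoint_image_cutPairs (hν hij))
    (fun k => Finset.card_image_le.trans (card_cutPairs R (ν k)).le) hq0 hq1] with ω hω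
  exact hl.frequently (hω.mono fun k hk x y hx hy hxy =>
    hk _ (Finset.mem_image_of_mem _ (mem_cutPairs.2 (by omega))))

lemma IsGrandCoupling.ae_frequently_isClosedCut_atBot_atTop {U : Sym2 ℤ → Ω → ℝ}
    (hU : IsGrandCoupling P U) (R : ℕ) {q : ℝ} (hq0 : 0 ≤ q) (hq1 : q < 1) :
    ∀ᵐ ω ∂P, (∃ᶠ n in atBot, IsClosedCut R (fun e => U e ω) q n) ∧
      ∃ᶠ n in atTop, IsClosedCut R (fun e => U e ω) q n := by
  have hsep : ∀ t : ℕ → ℤ, Function.Injective t →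
      Pairwise fun i j => R ≤ ((R + 1) • t i - (R + 1) • t j).natAbs := by
    intro t ht i j hij
    rw [← smul_sub, nsmul_eq_mul, Int.natAbs_mul, Int.natAbs_natCast]
    exact R.le_succ.trans
      (Nat.le_mul_of_pos_right _ (Int.natAbs_pos.2 (sub_ne_zero.2 (ht.ne hij))))
  have hnat : Tendsto (fun k : ℕ => (k : ℤ)) atTop atTop := tendsto_natCast_atTop_atTop
  filter_upwards [hU.ae_frequently_isClosedCut (hsep _ (neg_injective.comp Nat.cast_injective))
      ((tendsto_neg_atTop_atBot.comp hnat).nsmul_atBot R.succ_pos) hq0 hq1,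
    hU.ae_frequently_isClosedCut (hsep _ Nat.cast_injective) (hnat.nsmul_atTop R.succ_pos) hq0 hq1]
    with ω hbot htop using ⟨hbot, htop⟩

end GrandCoupling

theorem statement_3_general
    (S : Finset ℤ) (G : SimpleGraph ℤ)
    (hAdj : ∀ x y : ℤ, G.Adj x y ↔ x - y ∈ S)
    (c1 c2 : ℤ → ℤ → ℝ)
    (c : ℝ) (hc2bdd : ∀ x y, c2 x y ≤ c)
    {Ω : Type*} [MeasurableSpace Ω] (P : Measure Ω)
    (U : Sym2 ℤ → Ω → ℝ) (hU : IsGrandCoupling P U) :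
    ∀ᵐ a ∂P, ∀ p : ℝ, 0 ≤ p → p < 1 →
      NetRecurrent G (dCond c1 c2 (fun e => U e a) p) := by
  have hG : ∀ x y, G.Adj x y → (x - y).natAbs ≤ S.sup Int.natAbs := fun x y h =>
    Finset.le_sup (f := Int.natAbs) ((hAdj x y).1 h)
  have hclosed : ∀ᵐ ω ∂P, ∀ q : ℚ, 0 ≤ (q : ℝ) → (q : ℝ) < 1 →
      (∃ᶠ n in atBot, IsClosedCut (S.sup Int.natAbs) (fun e => U e ω) q n) ∧
        ∃ᶠ n in atTop, IsClosedCut (S.sup Int.natAbs) (fun e => U e ω) q n :=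
    ae_all_iff.2 fun q => eventually_imp_distrib_left.2 fun hq0 =>
      eventually_imp_distrib_left.2 fun hq1 => hU.ae_frequently_isClosedCut_atBot_atTop _ hq0 hq1
  filter_upwards [hclosed] with ω hω p hp0 hp1
  obtain ⟨q, hpq, hq1⟩ := exists_rat_btwn hp1
  obtain ⟨hbot, htop⟩ := hω q (hp0.trans hpq.le) hq1
  have hcut : ∀ n, IsClosedCut (S.sup Int.natAbs) (fun e => U e ω) q n →
      ∀ x y, G.Adj x y → x ≤ n → n < y → dCond c1 c2 (fun e => U e ω) p x y ≤ c := by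
    intro n hn x y hxy hx hy
    rw [dCond, if_neg (hpq.trans (hn x y hx hy (hG x y hxy))).not_ge]
    exact hc2bdd x y
  exact netRecurrent_of_frequently_cut_le hG (hbot.mono hcut) (htop.mono hcut)

/-- Let `G` be a Cayley graph of the group `ℤ` with respect to a finite symmetric
generating set `S` (so `x ~ y` iff `x - y ∈ S`), and let `(G, c1)` and `(G, c2)` be two networks
on `G` with `sup_e c2(e) < ∞`. Then almost surely, for every `p ∈ [0,1)` simultaneously, the
disordered random network `(G, c1, c2, p)` is recurrent. -/
theorem statement_3
    (S : Finset ℤ) (G : SimpleGraph ℤ)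
    (hAdj : ∀ x y : ℤ, G.Adj x y ↔ x - y ∈ S)
    (hgen : AddSubgroup.closure (S : Set ℤ) = ⊤)
    (c1 c2 : ℤ → ℤ → ℝ)
    (hc1symm : ∀ x y, c1 x y = c1 y x) (hc1nonneg : ∀ x y, 0 ≤ c1 x y)
    (hc1supp : ∀ x y, ¬ G.Adj x y → c1 x y = 0)
    (hc2symm : ∀ x y, c2 x y = c2 y x) (hc2nonneg : ∀ x y, 0 ≤ c2 x y)
    (hc2supp : ∀ x y, ¬ G.Adj x y → c2 x y = 0)
    (c : ℝ) (hc2bdd : ∀ x y, c2 x y ≤ c)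
    {Ω : Type*} [MeasurableSpace Ω] (P : Measure Ω) [IsProbabilityMeasure P]
    (U : Sym2 ℤ → Ω → ℝ) (hU : IsGrandCoupling P U) :
    ∀ᵐ a ∂P, ∀ p : ℝ, 0 ≤ p → p < 1 →
      NetRecurrent G (dCond c1 c2 (fun e => U e a) p) :=
  statement_3_general S G hAdj c1 c2 c hc2bdd P U hU
end
end

section
/- Every connected, locally finite, quasi-transitive infinite graph G with a fixed root o admits a spanning tree 𝒯 (a geodesic spanning tree) such that the distance in 𝒯 from o to each vertex equals the distance in G, and the branching number, the growth rate of 𝒯, and the growth rate of G all coincide: br(𝒯) = gr(𝒯) = gr(G). -/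
open MeasureTheory ProbabilityTheory Filter
open scoped ENNReal Classical

noncomputable section

variable {V : Type*}

/-- The distance from an edge `e = {x,y}` to the root `o`: `min(dist(o,x), dist(o,y))`. -/
def edgeDistToRoot (G : SimpleGraph V) (o : V) : Sym2 V → ℕ :=
  Sym2.lift ⟨fun x y => min (G.dist o x) (G.dist o y), fun _ _ => min_comm _ _⟩

/-- A finite set of edges of `T` is a cutset separating the root `o` from infinity if after
deleting it, the connected component of `o` is finite. -/
def IsCutset (T : SimpleGraph V) (o : V) (C : Finset (Sym2 V)) : Prop :=
  (∀ e ∈ C, e ∈ T.edgeSet) ∧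
    {y : V | (T.deleteEdges (C : Set (Sym2 V))).Reachable o y}.Finite

/-- The branching number of the tree `T` rooted at `o`:
`br(T) = sup {λ ≥ 0 : inf_Π ∑_{e∈Π} λ^{−|e|} > 0}`, the infimum running over all cutsets
separating the root from infinity. -/
def branchingNumber (T : SimpleGraph V) (o : V) : ℝ :=
  sSup {l : ℝ | 0 ≤ l ∧ ∃ ε : ℝ, 0 < ε ∧
    ∀ C : Finset (Sym2 V), IsCutset T o C →
      ε ≤ ∑ e ∈ C, l ^ (-(edgeDistToRoot T o e : ℤ))}

/-!
A breadth-first-search tree `T` of `G` rooted at `o` is geodesic, so `T` and `G` have the same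
balls `B_n` and hence the same growth rate `g`. It exists by Fekete's lemma, because
quasi-transitivity makes ball sizes submultiplicative up to a fixed shift `D`:
`|B_{n+m}| ≤ |B_n| |B_{m+D}|`.

Cutting `T` at level `n` costs about `|B_{n+1}| λ^{-n}`, so `br T ≤ g`. Conversely, for any cutset
`Π`, the part of `T` beyond a cut edge `e` lies in a `G`-ball around the far endpoint of `e`, whose
size quasi-transitivity bounds by `B |B_{n-|e|-1}|`; this gives the renewal inequality
`|B_n| ≤ K + B ∑_{e ∈ Π} |B_{n-|e|-1}|`. For `1 < λ < g` the series `∑ |B_n| λ^{-n}` diverges, and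
summing the renewal inequality against `λ^{-n}` then forces `B ∑_{e ∈ Π} λ^{-|e|-1} ≥ 1`, whence
`br T ≥ g`.
-/

open Topology

theorem tendsto_div_natCast_of_tendsto_shift {u : ℕ → ℝ} {L : ℝ} (D : ℕ)
    (h : Tendsto (fun n : ℕ => u (n + D) / n) atTop (𝓝 L)) :
    Tendsto (fun n : ℕ => u n / n) atTop (𝓝 L) := by
  rw [← tendsto_add_atTop_iff_nat D, ← mul_one L]
  refine (h.mul (tendsto_natCast_div_add_atTop (D : ℝ))).congr' ?_
  filter_upwards [eventually_ne_atTop 0] with n hn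
  have : (n : ℝ) ≠ 0 := by exact_mod_cast hn
  push_cast
  field_simp

theorem sum_range_ite_sub_le {f : ℕ → ℝ} (hf : 0 ≤ f) (c M : ℕ) :
    ∑ n ∈ Finset.range M, (if c ≤ n then f (n - c) else 0) ≤ ∑ n ∈ Finset.range M, f n := by
  rw [Finset.sum_ite, Finset.sum_const_zero, add_zero]
  have : (Finset.range M).filter (c ≤ ·) = Finset.Ico c M := by ext; simp [and_comm]
  rw [this, Finset.sum_Ico_eq_sum_range]
  simp only [add_tsub_cancel_left]
  exact Finset.sum_le_sum_of_subset_of_nonneg (Finset.range_subset_range.2 (by omega))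
    fun n _ _ => hf n

theorem sum_range_ite_sub_mul_pow_le {a : ℕ → ℝ} (ha : 0 ≤ a) {q : ℝ} (hq : 0 ≤ q) (c M : ℕ) :
    ∑ n ∈ Finset.range M, (if c ≤ n then a (n - c) else 0) * q ^ n ≤
      q ^ c * ∑ n ∈ Finset.range M, a n * q ^ n := by
  have hterm (n : ℕ) : (if c ≤ n then a (n - c) else 0) * q ^ n =
      q ^ c * if c ≤ n then a (n - c) * q ^ (n - c) else 0 := by
    split_ifs with h
    · rw [← Nat.add_sub_cancel' h, pow_add, Nat.add_sub_cancel_left]; ring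
    · simp
  simp only [hterm, ← Finset.mul_sum]
  exact mul_le_mul_of_nonneg_left (sum_range_ite_sub_le (f := fun n => a n * q ^ n)
    (fun n => mul_nonneg (ha n) (pow_nonneg hq n)) c M) (by positivity)

/-- Multiplying the renewal inequality by `q ^ n` and summing turns the convolution into a product:
`S ≤ K / (1 - q) + (B * ∑ i, q ^ c i) * S` for every partial sum `S` of `∑ a n q ^ n`. -/
theorem one_le_of_renewal {ι : Type*} (C : Finset ι) (c : ι → ℕ) {a : ℕ → ℝ} (ha : 0 ≤ a)
    {K B q : ℝ} (hK : 0 ≤ K) (hB : 0 ≤ B) (hq0 : 0 < q) (hq1 : q < 1)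
    (h : ∀ n, a n ≤ K + B * ∑ i ∈ C, if c i ≤ n then a (n - c i) else 0)
    (hS : ¬ BddAbove (Set.range fun M => ∑ n ∈ Finset.range M, a n * q ^ n)) :
    1 ≤ B * ∑ i ∈ C, q ^ c i := by
  set θ := B * ∑ i ∈ C, q ^ c i
  by_contra! hθ
  refine hS ⟨K / (1 - q) / (1 - θ), ?_⟩
  rintro _ ⟨M, rfl⟩
  set S := ∑ n ∈ Finset.range M, a n * q ^ n
  have hgeom : ∑ n ∈ Finset.range M, q ^ n ≤ 1 / (1 - q) := by
    have := geom_sum_Ico_le_of_lt_one (m := 0) (n := M) hq0.le hq1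
    rwa [← Finset.range_eq_Ico, pow_zero] at this
  have key : S ≤ K / (1 - q) + θ * S :=
    calc S ≤ ∑ n ∈ Finset.range M, (K + B * ∑ i ∈ C, if c i ≤ n then a (n - c i) else 0) * q ^ n :=
          Finset.sum_le_sum fun n _ => mul_le_mul_of_nonneg_right (h n) (by positivity)
      _ = K * ∑ n ∈ Finset.range M, q ^ n +
            B * ∑ i ∈ C, ∑ n ∈ Finset.range M, (if c i ≤ n then a (n - c i) else 0) * q ^ n := by
          simp only [add_mul, Finset.sum_add_distrib, Finset.mul_sum, Finset.sum_mul, mul_assoc]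
          rw [Finset.sum_comm]
      _ ≤ K / (1 - q) + B * ∑ i ∈ C, q ^ c i * S := by
          rw [div_eq_mul_one_div]
          refine add_le_add (mul_le_mul_of_nonneg_left hgeom hK)
            (mul_le_mul_of_nonneg_left (Finset.sum_le_sum fun i _ => ?_) hB)
          exact sum_range_ite_sub_mul_pow_le ha hq0.le (c i) M
      _ = K / (1 - q) + θ * S := by rw [← Finset.sum_mul, mul_assoc]
  rw [le_div_iff₀ (by linarith)]
  linarith

theorem not_bddAbove_sum_mul_pow {a : ℕ → ℝ} (ha : 0 ≤ a) {g q : ℝ} (hq : 0 < q)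
    (hgq : 1 < g * q) {D : ℕ} (hg : ∀ n, g ^ n ≤ a (n + D)) :
    ¬ BddAbove (Set.range fun M => ∑ n ∈ Finset.range M, a n * q ^ n) := by
  rintro ⟨b, hb⟩
  obtain ⟨m, hm⟩ := ((tendsto_pow_atTop_atTop_of_one_lt hgq).const_mul_atTop
    (pow_pos hq D)).eventually_gt_atTop b |>.exists
  refine hm.not_ge (le_trans ?_ (hb ⟨m + D + 1, rfl⟩))
  calc q ^ D * (g * q) ^ m = g ^ m * q ^ (m + D) := by ring
    _ ≤ a (m + D) * q ^ (m + D) := by gcongr; exact hg m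
    _ ≤ ∑ n ∈ Finset.range (m + D + 1), a n * q ^ n :=
        Finset.single_le_sum (f := fun n => a n * q ^ n)
          (fun n _ => mul_nonneg (ha n) (by positivity)) (by simp)

theorem IsCutset.nonempty [Infinite V] {T : SimpleGraph V} (hT : T.Connected) {o : V}
    {C : Finset (Sym2 V)} (hC : IsCutset T o C) : C.Nonempty := by
  rw [Finset.nonempty_iff_ne_empty]
  rintro rfl
  apply Set.infinite_univ (α := V)
  simpa [hT.preconnected o] using hC.2

namespace SimpleGraph

variable {G : SimpleGraph V} {o : V}

theorem Connected.exists_adj_dist_add_one (hG : G.Connected) {v : V} (hv : v ≠ o) :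
    ∃ u, G.Adj u v ∧ G.dist o u + 1 = G.dist o v := by
  obtain ⟨p, hp⟩ := hG.exists_walk_length_eq_dist v o
  obtain ⟨u, hvu, q, rfl⟩ := p.exists_eq_cons_of_ne hv
  refine ⟨u, hvu.symm, le_antisymm ?_ ?_⟩
  · have hq := dist_le q.reverse
    have hv : G.dist o v = q.length + 1 := by rw [dist_comm, ← hp, Walk.length_cons]
    rw [Walk.length_reverse] at hq
    omega
  · have := hG.dist_triangle (u := o) (v := u) (w := v)
    rwa [dist_eq_one_iff_adj.mpr hvu.symm] at this

variable (G o) in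
/-- The junk value `o` is taken when `v` has no neighbour closer to `o`, e.g. for `v = o`. -/
def bfsParent (v : V) : V :=
  if h : ∃ u, G.Adj u v ∧ G.dist o u + 1 = G.dist o v then h.choose else o

theorem bfsParent_spec (hG : G.Connected) {v : V} (hv : v ≠ o) :
    G.Adj (bfsParent G o v) v ∧ G.dist o (bfsParent G o v) + 1 = G.dist o v := by
  have h := hG.exists_adj_dist_add_one hv
  rw [bfsParent, dif_pos h]
  exact h.choose_spec

theorem bfsParent_ne {v : V} (hv : v ≠ o) : bfsParent G o v ≠ v := by
  unfold bfsParent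
  split_ifs with h
  · exact h.choose_spec.1.ne
  · exact hv.symm

@[simp]
theorem bfsParent_self : bfsParent G o o = o := by
  simp [bfsParent]

theorem dist_bfsParent (hG : G.Connected) (v : V) :
    G.dist o (bfsParent G o v) = G.dist o v - 1 := by
  obtain rfl | hv := eq_or_ne v o
  · simp
  · have := (bfsParent_spec hG hv).2
    omega

theorem dist_bfsParent_le_one (hG : G.Connected) (v : V) : G.dist (bfsParent G o v) v ≤ 1 := by
  obtain rfl | hv := eq_or_ne v o
  · simp
  · exact (dist_eq_one_iff_adj.mpr (bfsParent_spec hG hv).1).le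

theorem dist_iterate_bfsParent (hG : G.Connected) (w : V) (k : ℕ) :
    G.dist o ((bfsParent G o)^[k] w) = G.dist o w - k ∧ G.dist ((bfsParent G o)^[k] w) w ≤ k := by
  induction k with
  | zero => simp
  | succ k ih =>
    rw [Function.iterate_succ_apply', dist_bfsParent hG]
    have := hG.dist_triangle (u := bfsParent G o ((bfsParent G o)^[k] w))
      (v := (bfsParent G o)^[k] w) (w := w)
    have := dist_bfsParent_le_one hG (o := o) ((bfsParent G o)^[k] w)
    omega

theorem injective_bfsParent_edge (hG : G.Connected) :
    Function.Injective fun y => s(bfsParent G o y, y) := by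
  intro y z h
  simp only [Sym2.eq_iff] at h
  rcases h with ⟨-, h⟩ | ⟨hyz, hzy⟩
  · exact h
  · have hy := dist_bfsParent hG (o := o) y
    have hz := dist_bfsParent hG (o := o) z
    rw [hyz] at hy
    rw [← hzy] at hz
    rw [← hG.dist_eq_zero_iff.mp (by omega : G.dist o y = 0),
      ← hG.dist_eq_zero_iff.mp (by omega : G.dist o z = 0)]

variable (G o) in
def bfsTree : SimpleGraph V where
  Adj x y := (x ≠ o ∧ bfsParent G o x = y) ∨ (y ≠ o ∧ bfsParent G o y = x)
  symm := ⟨fun _ _ h => h.symm⟩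
  loopless := ⟨fun _ h => by rcases h with ⟨hx, h⟩ | ⟨hx, h⟩ <;> exact bfsParent_ne hx h⟩

theorem bfsTree_le (hG : G.Connected) : bfsTree G o ≤ G := by
  rintro x y (⟨hx, rfl⟩ | ⟨hy, rfl⟩)
  · exact (bfsParent_spec hG hx).1.symm
  · exact (bfsParent_spec hG hy).1

theorem bfsTree_adj_bfsParent {v : V} (hv : v ≠ o) : (bfsTree G o).Adj (bfsParent G o v) v :=
  Or.inr ⟨hv, rfl⟩

theorem bfsTree_adj_cases (hG : G.Connected) {x y : V} (h : (bfsTree G o).Adj x y) :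
    (y ≠ o ∧ bfsParent G o y = x ∧ G.dist o y = G.dist o x + 1) ∨
      (x ≠ o ∧ bfsParent G o x = y ∧ G.dist o x = G.dist o y + 1) := by
  rcases h with ⟨hx, rfl⟩ | ⟨hy, rfl⟩
  · exact Or.inr ⟨hx, rfl, (bfsParent_spec hG hx).2.symm⟩
  · exact Or.inl ⟨hy, rfl, (bfsParent_spec hG hy).2.symm⟩

theorem exists_bfsTree_walk_length_eq_dist (hG : G.Connected) (v : V) :
    ∃ p : (bfsTree G o).Walk o v, p.length = G.dist o v := by
  induction hd : G.dist o v generalizing v with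
  | zero => exact ⟨.copy .nil rfl (hG.dist_eq_zero_iff.mp hd), by simp⟩
  | succ d ih =>
    have hv : v ≠ o := by rintro rfl; simp at hd
    obtain ⟨p, hp⟩ := ih (bfsParent G o v) (by rw [dist_bfsParent hG, hd]; rfl)
    exact ⟨p.concat (bfsTree_adj_bfsParent hv), by simp [hp]⟩

theorem dist_bfsTree (hG : G.Connected) (v : V) : (bfsTree G o).dist o v = G.dist o v := by
  obtain ⟨p, hp⟩ := exists_bfsTree_walk_length_eq_dist hG v
  exact le_antisymm (hp ▸ dist_le p) (Reachable.dist_anti (bfsTree_le hG) ⟨p⟩)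

theorem bfsTree_connected (hG : G.Connected) : (bfsTree G o).Connected :=
  (connected_iff_exists_forall_reachable _).2
    ⟨o, fun v => ⟨(exists_bfsTree_walk_length_eq_dist hG v).choose⟩⟩

/-- At a vertex `u` of a cycle farthest from `o`, both cycle neighbours are closer to `o`, so both
are the parent of `u`; but they are distinct. -/
theorem bfsTree_isAcyclic (hG : G.Connected) : (bfsTree G o).IsAcyclic := by
  intro v c hc
  obtain ⟨u, hu, hmax⟩ := c.support.toFinset.exists_max_image (G.dist o)
    ⟨v, by simp⟩
  simp only [List.mem_toFinset] at hu hmax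
  have hc' := hc.rotate hu
  have hsupp : ∀ x ∈ (c.rotate u hu).support, G.dist o x ≤ G.dist o u :=
    fun x hx => hmax x ((c.mem_support_rotate_iff u hu).1 hx)
  have parent_of_mem {x : V} (hx : x ∈ (c.rotate u hu).support) (hadj : (bfsTree G o).Adj u x) :
      x = bfsParent G o u := by
    rcases bfsTree_adj_cases hG hadj with ⟨-, -, hd⟩ | ⟨-, h, -⟩
    · exact absurd (hsupp x hx) (by omega)
    · exact h.symm
  exact hc'.snd_ne_penultimate <|
    (parent_of_mem (Walk.getVert_mem_support _ _) (Walk.adj_snd hc'.not_nil)).trans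
      (parent_of_mem (Walk.getVert_mem_support _ _) (Walk.adj_penultimate hc'.not_nil).symm).symm

theorem edgeDistToRoot_bfsTree (hG : G.Connected) {y : V} (hy : y ≠ o) :
    edgeDistToRoot (bfsTree G o) o s(bfsParent G o y, y) + 1 = G.dist o y := by
  have := (bfsParent_spec hG hy).2
  simp only [edgeDistToRoot, Sym2.lift_mk, dist_bfsTree hG]
  omega

theorem dist_le_of_reachable_deleteEdges_bfsTree (hG : G.Connected) {C : Set (Sym2 V)} {n : ℕ}
    (hC : ∀ y, G.dist o y = n + 1 → s(bfsParent G o y, y) ∈ C) {w : V}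
    (hw : ((bfsTree G o).deleteEdges C).Reachable o w) : G.dist o w ≤ n := by
  rw [reachable_iff_reflTransGen] at hw
  induction hw with
  | refl => simp
  | tail _ hadj ih =>
    rw [deleteEdges_adj] at hadj
    rcases bfsTree_adj_cases hG hadj.1 with ⟨-, rfl, hd⟩ | ⟨-, -, hd⟩
    · by_contra hlt
      exact hadj.2 (hC _ (by omega))
    · omega

theorem reachable_deleteEdges_bfsTree_or (hG : G.Connected) (C : Set (Sym2 V)) (w : V) :
    ((bfsTree G o).deleteEdges C).Reachable o w ∨
      ∃ y, s(bfsParent G o y, y) ∈ C ∧ G.dist o y ≤ G.dist o w ∧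
        G.dist y w ≤ G.dist o w - G.dist o y := by
  induction hd : G.dist o w generalizing w with
  | zero => exact .inl (hG.dist_eq_zero_iff.mp hd ▸ .rfl)
  | succ d ih =>
    have hw : w ≠ o := by rintro rfl; simp at hd
    by_cases hwC : s(bfsParent G o w, w) ∈ C
    · exact .inr ⟨w, hwC, le_of_eq hd, by simp⟩
    rcases ih (bfsParent G o w) (by rw [dist_bfsParent hG, hd]; rfl) with h | ⟨y, hyC, hy, hyw⟩
    · exact .inl (h.trans (deleteEdges_adj.2 ⟨bfsTree_adj_bfsParent hw, hwC⟩).reachable)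
    · refine .inr ⟨y, hyC, by omega, ?_⟩
      have := hG.dist_triangle (u := y) (v := bfsParent G o w) (w := w)
      have := dist_bfsParent_le_one hG (o := o) w
      omega

theorem Hom.dist_map_le {W : Type*} {G' : SimpleGraph W} (ψ : G →g G') {x y : V}
    (h : G.Reachable x y) :
    G'.dist (ψ x) (ψ y) ≤ G.dist x y := by
  obtain ⟨p, hp⟩ := h.exists_walk_length_eq_dist
  exact hp ▸ (p.length_map ψ) ▸ dist_le (p.map ψ)

theorem Iso.dist_map {W : Type*} {G' : SimpleGraph W} (hG : G.Connected) (φ : G ≃g G')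
    (x y : V) :
    G'.dist (φ x) (φ y) = G.dist x y := by
  refine le_antisymm (Hom.dist_map_le φ.toHom (hG x y)) ?_
  simpa using Hom.dist_map_le φ.symm.toHom ((hG.map φ.toHom φ.surjective) (φ x) (φ y))

variable (G) in
def ballCard (x : V) (n : ℕ) : ℕ := {y | G.dist x y ≤ n}.ncard

theorem _root_.HasGrowthRate.eventually_le_pow {g ν : ℝ} (h : HasGrowthRate G o g) (hν : g < ν) :
    ∀ᶠ n : ℕ in atTop, (G.ballCard o n : ℝ) ≤ ν ^ n := by
  filter_upwards [h.eventually_lt_const hν, eventually_ne_atTop 0] with n hn hn0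
  calc (G.ballCard o n : ℝ) = ((G.ballCard o n : ℝ) ^ ((n : ℝ)⁻¹)) ^ n := by
        rw [← Real.rpow_natCast, ← Real.rpow_mul (by positivity),
          inv_mul_cancel₀ (by exact_mod_cast hn0), Real.rpow_one]
    _ ≤ ν ^ n := pow_le_pow_left₀ (by positivity) hn.le n

variable [G.LocallyFinite]

theorem Connected.finite_setOf_dist_le (hG : G.Connected) (x : V) (n : ℕ) :
    {y | G.dist x y ≤ n}.Finite := by
  induction n with
  | zero => simp [hG.dist_eq_zero_iff]
  | succ n ih =>
    refine (ih.biUnion fun z _ => (G.neighborSet z).toFinite.insert z).subset fun y hy => ?_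
    simp only [Set.mem_ofPred_eq, Set.mem_iUnion, Set.mem_insert_iff, mem_neighborSet] at hy ⊢
    by_cases hyn : G.dist x y ≤ n
    · exact ⟨y, hyn, .inl rfl⟩
    · have hyx : y ≠ x := by rintro rfl; simp at hyn
      obtain ⟨u, hu, hd⟩ := hG.exists_adj_dist_add_one hyx
      exact ⟨u, by omega, .inr hu⟩

theorem Connected.one_le_ballCard (hG : G.Connected) (x : V) (n : ℕ) : 1 ≤ G.ballCard x n :=
  (Set.ncard_pos (hG.finite_setOf_dist_le x n)).2 ⟨x, by simp⟩

theorem Connected.ballCard_add_le_mul (hG : G.Connected) {D : ℕ}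
    (hD : ∀ x r, G.ballCard x r ≤ G.ballCard o (r + D)) (n m : ℕ) :
    G.ballCard o (n + m) ≤ G.ballCard o n * G.ballCard o (m + D) := by
  let S := (hG.finite_setOf_dist_le o n).toFinset
  have hcover : {w | G.dist o w ≤ n + m} ⊆ ⋃ x ∈ S, {w | G.dist x w ≤ m} := fun w hw => by
    have := dist_iterate_bfsParent hG (o := o) w m
    simp only [Set.mem_ofPred_eq, Set.mem_iUnion, Set.Finite.mem_toFinset, S] at hw ⊢
    exact ⟨_, by omega, this.2⟩
  calc G.ballCard o (n + m) ≤ (⋃ x ∈ S, {w | G.dist x w ≤ m}).ncard :=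
        Set.ncard_le_ncard hcover <| S.finite_toSet.biUnion fun x _ => hG.finite_setOf_dist_le x m
    _ ≤ ∑ x ∈ S, G.ballCard x m := Finset.set_ncard_biUnion_le _ _
    _ ≤ ∑ _x ∈ S, G.ballCard o (m + D) := Finset.sum_le_sum fun x _ => hD x m
    _ = G.ballCard o n * G.ballCard o (m + D) := by
        rw [Finset.sum_const, smul_eq_mul]
        exact congrArg (· * _) (Set.ncard_eq_toFinset_card _ _).symm

theorem Connected.exists_ballCard_le_of_quasiTransitive (hG : G.Connected)
    (hqt : QuasiTransitive G) (o : V) :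
    ∃ D, ∀ x r, G.ballCard x r ≤ G.ballCard o (r + D) := by
  obtain ⟨s, hs⟩ := hqt
  refine ⟨s.sup (G.dist o), fun x r => ?_⟩
  obtain ⟨y, hy, φ, rfl⟩ := hs x
  have himage : {w | G.dist (φ y) w ≤ r} = φ '' {w | G.dist y w ≤ r} := by
    ext w
    obtain ⟨w, rfl⟩ := φ.surjective w
    simp [Iso.dist_map hG, φ.injective.eq_iff]
  rw [ballCard, himage, Set.ncard_image_of_injective _ φ.injective]
  refine Set.ncard_le_ncard (fun w (hw : G.dist y w ≤ r) => ?_) (hG.finite_setOf_dist_le o _)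
  have := hG.dist_triangle (u := o) (v := y) (w := w)
  have : G.dist o y ≤ s.sup (G.dist o) := Finset.le_sup hy
  show G.dist o w ≤ r + s.sup (G.dist o)
  omega

theorem _root_.HasGrowthRate.one_le (hG : G.Connected) {g : ℝ}
    (h : HasGrowthRate G o g) : 1 ≤ g :=
  ge_of_tendsto' h fun n => Real.one_le_rpow (by exact_mod_cast hG.one_le_ballCard o n)
    (by positivity)

/-- Fekete's lemma applied to the subadditive sequence `n ↦ log |B_{n+D}(o)|`. -/
theorem Connected.exists_hasGrowthRate (hG : G.Connected) {D : ℕ}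
    (hD : ∀ x r, G.ballCard x r ≤ G.ballCard o (r + D)) :
    ∃ g, HasGrowthRate G o g ∧ ∀ n, g ^ n ≤ G.ballCard o (n + D) := by
  have one_le (n : ℕ) : (1 : ℝ) ≤ G.ballCard o n := by exact_mod_cast hG.one_le_ballCard o n
  set u : ℕ → ℝ := fun n => Real.log (G.ballCard o (n + D))
  have hu : Subadditive u := fun m n => by
    rw [← Real.log_mul (by linarith [one_le (m + D)]) (by linarith [one_le (n + D)])]
    refine Real.log_le_log (by linarith [one_le (m + n + D)]) ?_
    have := hG.ballCard_add_le_mul hD (m + D) n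
    rw [add_right_comm] at this
    exact_mod_cast this
  have hbdd : BddBelow (Set.range fun n => u n / n) :=
    ⟨0, by rintro _ ⟨n, rfl⟩; exact div_nonneg (Real.log_nonneg (one_le _)) n.cast_nonneg⟩
  refine ⟨Real.exp hu.lim, ?_, fun n => ?_⟩
  · have hlog := tendsto_div_natCast_of_tendsto_shift (u := fun n => Real.log (G.ballCard o n)) D
      (hu.tendsto_lim hbdd)
    refine ((Real.continuous_exp.tendsto _).comp hlog).congr fun n => ?_
    change _ = (G.ballCard o n : ℝ) ^ ((n : ℝ)⁻¹)
    rw [Function.comp_apply, Real.rpow_def_of_pos (by linarith [one_le n]), div_eq_mul_inv]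
  · obtain rfl | hn := eq_or_ne n 0
    · simpa using one_le D
    have := hu.lim_le_div hbdd hn
    rw [le_div_iff₀ (by positivity)] at this
    calc Real.exp hu.lim ^ n = Real.exp (hu.lim * n) := by rw [← Real.exp_nat_mul, mul_comm]
      _ ≤ Real.exp (u n) := Real.exp_le_exp.2 this
      _ = G.ballCard o (n + D) := Real.exp_log (by linarith [one_le (n + D)])

theorem Connected.exists_isCutset_bfsTree_sum_lt (hG : G.Connected) {g l ε : ℝ}
    (hg : HasGrowthRate G o g) (hgl : g < l) (hε : 0 < ε) :
    ∃ C, IsCutset (bfsTree G o) o C ∧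
      ∑ e ∈ C, l ^ (-(edgeDistToRoot (bfsTree G o) o e : ℤ)) < ε := by
  obtain ⟨ν, hgν, hνl⟩ := exists_between hgl
  have hν : 0 < ν := by linarith [hg.one_le hG]
  have hl : 0 < l := hν.trans hνl
  have hsmall : Tendsto (fun n : ℕ => ν * (ν / l) ^ n) atTop (𝓝 0) := by
    simpa using (tendsto_pow_atTop_nhds_zero_of_lt_one (by positivity)
      ((div_lt_one hl).2 hνl)).const_mul ν
  obtain ⟨n, hball, hn⟩ := (((tendsto_add_atTop_nat 1).eventually
    (hg.eventually_le_pow hgν)).and (hsmall.eventually_lt_const hε)).exists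
  set S := (hG.finite_setOf_dist_le o (n + 1)).toFinset.filter (fun y => G.dist o y = n + 1)
  have hS {y : V} : y ∈ S ↔ G.dist o y = n + 1 := by simp +contextual [S]
  have hSo {y : V} (hy : y ∈ S) : y ≠ o := by rintro rfl; simp [hS] at hy
  refine ⟨S.image fun y => s(bfsParent G o y, y), ⟨?_, ?_⟩, ?_⟩
  · simp only [Finset.mem_image]
    rintro _ ⟨y, hy, rfl⟩
    exact bfsTree_adj_bfsParent (hSo hy)
  · refine (hG.finite_setOf_dist_le o n).subset fun w hw => ?_
    refine dist_le_of_reachable_deleteEdges_bfsTree hG (fun y hy => ?_) hw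
    exact Finset.mem_image.2 ⟨y, hS.2 hy, rfl⟩
  have hterm (y : V) (hy : y ∈ S) :
      l ^ (-(edgeDistToRoot (bfsTree G o) o s(bfsParent G o y, y) : ℤ)) = l ^ (-(n : ℤ)) := by
    have := edgeDistToRoot_bfsTree hG (hSo hy)
    rw [hS.1 hy] at this
    rw [Nat.add_right_cancel this]
  have hcard : (S.card : ℝ) ≤ G.ballCard o (n + 1) := by
    rw [ballCard, Set.ncard_eq_toFinset_card _ (hG.finite_setOf_dist_le o (n + 1))]
    exact_mod_cast Finset.card_filter_le _ _
  rw [Finset.sum_image fun y _ z _ h => injective_bfsParent_edge hG h,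
    Finset.sum_congr rfl hterm, Finset.sum_const, nsmul_eq_mul]
  calc (S.card : ℝ) * l ^ (-(n : ℤ)) ≤ ν ^ (n + 1) * l ^ (-(n : ℤ)) :=
        mul_le_mul_of_nonneg_right (hcard.trans hball) (by positivity)
    _ = ν * (ν / l) ^ n := by rw [zpow_neg, zpow_natCast, div_pow, pow_succ]; ring
    _ < ε := hn

theorem Connected.ballCard_le_of_isCutset_bfsTree (hG : G.Connected) {D : ℕ}
    (hD : ∀ x r, G.ballCard x r ≤ G.ballCard o (r + D)) {C : Finset (Sym2 V)}
    (hC : IsCutset (bfsTree G o) o C) (n : ℕ) :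
    G.ballCard o n ≤ {y | ((bfsTree G o).deleteEdges C).Reachable o y}.ncard +
      G.ballCard o (D + D) * ∑ y ∈ C.preimage (fun y => s(bfsParent G o y, y))
        (injective_bfsParent_edge hG).injOn,
          if G.dist o y ≤ n then G.ballCard o (n - G.dist o y) else 0 := by
  set K := {y | ((bfsTree G o).deleteEdges C).Reachable o y}
  set Y := (C.preimage (fun y => s(bfsParent G o y, y)) (injective_bfsParent_edge hG).injOn).filter
    (fun y => G.dist o y ≤ n)
  have hcover : {w | G.dist o w ≤ n} ⊆ K ∪ ⋃ y ∈ Y, {w | G.dist y w ≤ n - G.dist o y} := by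
    intro w hw
    rcases reachable_deleteEdges_bfsTree_or hG C w with h | ⟨y, hyC, hy, hyw⟩
    · exact .inl h
    · simp only [Set.mem_ofPred_eq] at hw
      simp only [Set.mem_union, Set.mem_iUnion, Finset.mem_filter, Finset.mem_preimage, Y]
      exact .inr ⟨y, ⟨hyC, by omega⟩, by simp only [Set.mem_ofPred_eq]; omega⟩
  calc G.ballCard o n ≤ (K ∪ ⋃ y ∈ Y, {w | G.dist y w ≤ n - G.dist o y}).ncard :=
        Set.ncard_le_ncard hcover <| hC.2.union <|
          Y.finite_toSet.biUnion fun y _ => hG.finite_setOf_dist_le y _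
    _ ≤ K.ncard + ∑ y ∈ Y, G.ballCard y (n - G.dist o y) :=
        (Set.ncard_union_le _ _).trans
          (Nat.add_le_add_left (Finset.set_ncard_biUnion_le Y _) K.ncard)
    _ ≤ K.ncard + ∑ y ∈ Y, G.ballCard o (D + D) * G.ballCard o (n - G.dist o y) := by
        gcongr with y
        rw [mul_comm]
        exact (hD y _).trans (hG.ballCard_add_le_mul hD _ D)
    _ = _ := by rw [← Finset.mul_sum, Finset.sum_filter]

theorem Connected.one_div_le_sum_of_isCutset_bfsTree (hG : G.Connected) {D : ℕ}
    (hD : ∀ x r, G.ballCard x r ≤ G.ballCard o (r + D)) {g l : ℝ}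
    (hg : ∀ n, g ^ n ≤ G.ballCard o (n + D)) (hl : 1 < l) (hlg : l < g)
    {C : Finset (Sym2 V)} (hC : IsCutset (bfsTree G o) o C) :
    1 / (G.ballCard o (D + D) : ℝ) ≤ ∑ e ∈ C, l ^ (-(edgeDistToRoot (bfsTree G o) o e : ℤ)) := by
  have hinj := injective_bfsParent_edge hG (o := o)
  set Y := C.preimage (fun y => s(bfsParent G o y, y)) hinj.injOn
  have hB : (0 : ℝ) < G.ballCard o (D + D) := by exact_mod_cast hG.one_le_ballCard o _
  have hq : 0 < l⁻¹ := by positivity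
  have hrenewal : 1 ≤ (G.ballCard o (D + D) : ℝ) * ∑ y ∈ Y, l⁻¹ ^ G.dist o y := by
    refine one_le_of_renewal Y (G.dist o) (a := fun n => (G.ballCard o n : ℝ))
      (K := ({y | ((bfsTree G o).deleteEdges C).Reachable o y}.ncard : ℝ))
      (fun n => by positivity) (Nat.cast_nonneg _) hB.le hq (inv_lt_one_of_one_lt₀ hl)
      (fun n => ?_) (not_bddAbove_sum_mul_pow (fun n => by positivity) hq ?_ hg)
    · have := hG.ballCard_le_of_isCutset_bfsTree hD hC n
      exact_mod_cast this
    · rw [← div_eq_mul_inv, one_lt_div (by positivity)]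
      exact hlg
  have hYo {y : V} (hy : y ∈ Y) : y ≠ o := by
    rintro rfl
    simpa using hC.1 _ (Finset.mem_preimage.1 hy)
  calc 1 / (G.ballCard o (D + D) : ℝ) ≤ ∑ y ∈ Y, l⁻¹ ^ G.dist o y := by
        rw [div_le_iff₀ hB]
        linarith
    _ ≤ ∑ y ∈ Y, l ^ (-(edgeDistToRoot (bfsTree G o) o s(bfsParent G o y, y) : ℤ)) := by
        refine Finset.sum_le_sum fun y hy => ?_
        rw [← edgeDistToRoot_bfsTree hG (hYo hy), zpow_neg, zpow_natCast, ← inv_pow]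
        exact pow_le_pow_of_le_one hq.le (inv_le_one_of_one_le₀ hl.le) (Nat.le_succ _)
    _ = ∑ e ∈ Y.image fun y => s(bfsParent G o y, y),
          l ^ (-(edgeDistToRoot (bfsTree G o) o e : ℤ)) := by
        rw [Finset.sum_image fun y _ z _ h => hinj h]
    _ ≤ ∑ e ∈ C, l ^ (-(edgeDistToRoot (bfsTree G o) o e : ℤ)) := by
        refine Finset.sum_le_sum_of_subset_of_nonneg ?_ fun e _ _ => by positivity
        rw [Finset.image_preimage]
        exact Finset.filter_subset _ _

theorem Connected.branchingNumber_bfsTree [Infinite V] (hG : G.Connected) {D : ℕ}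
    (hD : ∀ x r, G.ballCard x r ≤ G.ballCard o (r + D)) {g : ℝ} (hg : HasGrowthRate G o g)
    (hgD : ∀ n, g ^ n ≤ G.ballCard o (n + D)) :
    branchingNumber (bfsTree G o) o = g := by
  rw [branchingNumber]
  set S := {l : ℝ | 0 ≤ l ∧ ∃ ε : ℝ, 0 < ε ∧ ∀ C : Finset (Sym2 V), IsCutset (bfsTree G o) o C →
    ε ≤ ∑ e ∈ C, l ^ (-(edgeDistToRoot (bfsTree G o) o e : ℤ))}
  have one_mem : (1 : ℝ) ∈ S := by
    refine ⟨zero_le_one, 1, one_pos, fun C hC => ?_⟩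
    simpa using (hC.nonempty (bfsTree_connected hG)).card_pos
  have le_of_mem {l : ℝ} (hl : l ∈ S) : l ≤ g := by
    obtain ⟨-, ε, hε, hC⟩ := hl
    by_contra! hgl
    obtain ⟨C, hCcut, hCsum⟩ := hG.exists_isCutset_bfsTree_sum_lt hg hgl hε
    exact (hC C hCcut).not_gt hCsum
  refine le_antisymm (csSup_le ⟨1, one_mem⟩ fun l hl => le_of_mem hl)
    (le_of_forall_lt_imp_le_of_dense fun l hlg => ?_)
  have hbdd : BddAbove S := ⟨g, fun l hl => le_of_mem hl⟩
  rcases le_or_gt l 1 with hl | hl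
  · exact hl.trans (le_csSup hbdd one_mem)
  · exact le_csSup hbdd ⟨by linarith, _, by have := hG.one_le_ballCard o (D + D); positivity,
      fun C hC => hG.one_div_le_sum_of_isCutset_bfsTree hD hgD hl hlg hC⟩

end SimpleGraph

/-- Every connected, locally finite, quasi-transitive infinite graph `G` with a
fixed root `o` admits a geodesic spanning tree `T` (distances from `o` in `T` equal those in
`G`) such that `br(T) = gr(T) = gr(G)`. -/
theorem statement_14
    {V : Type*} (G : SimpleGraph V) [∀ v : V, Fintype (G.neighborSet v)] [Infinite V]
    (hconn : G.Connected) (hqt : QuasiTransitive G) (o : V) :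
    ∃ T : SimpleGraph V, T ≤ G ∧ T.Connected ∧ T.IsAcyclic ∧
      (∀ x : V, T.dist o x = G.dist o x) ∧
      ∃ g : ℝ, HasGrowthRate G o g ∧ HasGrowthRate T o g ∧ branchingNumber T o = g := by
  obtain ⟨D, hD⟩ := hconn.exists_ballCard_le_of_quasiTransitive hqt o
  obtain ⟨g, hg, hgD⟩ := hconn.exists_hasGrowthRate hD
  refine ⟨G.bfsTree o, G.bfsTree_le hconn, G.bfsTree_connected hconn, G.bfsTree_isAcyclic hconn,
    G.dist_bfsTree hconn, g, hg, ?_, hconn.branchingNumber_bfsTree hD hg hgD⟩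
  simpa only [HasGrowthRate, SimpleGraph.dist_bfsTree hconn] using hg
end
end
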